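/- arXiv:1406.5600 — 4 statements merged into one kernel-verified Lean document; each statement's English description precedes it below -/
import Mathlib

section
/- In the same setting, for any significance level ε ∈ (0,1): E[|Γ^ε(x)|] = E[|Γ^ε(x) \ {y_true}|] + (1 − ε), where Γ^ε(x) = {y : p(x,y) > ε}. Hence a conformity measure is N-optimal (minimizes expected prediction-set size at every level) if and only if it is OE-optimal (minimizes the expected number of false labels in the prediction set at every level). -/
/-! Splitting the prediction set into the true label and the false ones gives, pointwise,
`|Γ^ε| = |Γ^ε \ {y_true}| + 1{p(x, y_true) > ε}`. Taking expectations, the last term contributes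
`P(p(x, y_true) > ε) = 1 - ε` because the p-value of the true label is uniform on `[0, 1]`. The two
expected sizes thus differ by a constant independent of the conformity measure, so comparing two
measures by one criterion is the same as comparing them by the other. -/

open MeasureTheory Set

theorem Finset.card_eq_card_erase_add_ite {α : Type*} [DecidableEq α] (s : Finset α) (a : α) :
    s.card = (s.erase a).card + if a ∈ s then 1 else 0 := by
  split_ifs with h
  · exact (card_erase_add_one h).symm
  · rw [erase_eq_of_notMem h, add_zero]

theorem card_filter_gt_eq_card_erase_add_indicator {Y : Type*} [Fintype Y] [DecidableEq Y]
    (q : Y → ℝ) (a : Y) (ε : ℝ) :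
    ((Finset.univ.filter (fun y => q y > ε)).card : ℝ)
      = ((Finset.univ.filter (fun y => q y > ε)).erase a).card + (Ioi ε).indicator 1 (q a) := by
  rw [Finset.card_eq_card_erase_add_ite _ a]
  by_cases h : ε < q a <;> simp [h]

section UniformOnUnitInterval

variable {Ω : Type*} [MeasurableSpace Ω] {μ : Measure Ω} {X : Ω → ℝ}

theorem aemeasurable_of_map_eq_uniform (hX : μ.map X = volume.restrict (Icc 0 1)) :
    AEMeasurable X μ := by
  refine aemeasurable_of_map_neZero ⟨fun h => ?_⟩
  have h01 := congrArg (fun ν : Measure ℝ => ν (Icc 0 1)) (hX.symm.trans h)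
  simp [Measure.restrict_apply, Real.volume_Icc] at h01

theorem integrable_indicator_Ioi_comp_of_map_eq_uniform
    (hX : μ.map X = volume.restrict (Icc 0 1)) (ε : ℝ) :
    Integrable (fun ω => (Ioi ε).indicator (1 : ℝ → ℝ) (X ω)) μ := by
  have hind : Integrable ((Ioi ε).indicator (1 : ℝ → ℝ)) (μ.map X) := by
    rw [hX]
    exact (integrable_const 1).indicator measurableSet_Ioi
  exact (integrable_map_measure hind.aestronglyMeasurable
    (aemeasurable_of_map_eq_uniform hX)).mp hind

theorem integral_indicator_Ioi_comp_of_map_eq_uniform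
    (hX : μ.map X = volume.restrict (Icc 0 1)) {ε : ℝ} (hε : ε ∈ Icc 0 1) :
    ∫ ω, (Ioi ε).indicator (1 : ℝ → ℝ) (X ω) ∂μ = 1 - ε := by
  have hIoc : Ioi ε ∩ Icc 0 1 = Ioc ε 1 := by
    ext x
    simp only [mem_inter_iff, mem_Ioi, mem_Icc, mem_Ioc]
    constructor
    · rintro ⟨hεx, -, hx1⟩
      exact ⟨hεx, hx1⟩
    · rintro ⟨hεx, hx1⟩
      exact ⟨hεx, hε.1.trans hεx.le, hx1⟩
  rw [← integral_map (aemeasurable_of_map_eq_uniform hX)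
      ((measurable_one.indicator measurableSet_Ioi).aestronglyMeasurable), hX,
    integral_indicator_one measurableSet_Ioi, measureReal_restrict_apply measurableSet_Ioi, hIoc,
    Real.volume_real_Ioc_of_le hε.2]

end UniformOnUnitInterval

theorem integral_card_filter_gt_eq_integral_card_erase_add {Ω Y : Type*} [MeasurableSpace Ω]
    [Fintype Y] [DecidableEq Y] {μ : Measure Ω} {ytrue : Ω → Y} {p : Ω → Y → ℝ}
    (hunif : μ.map (fun ω => p ω (ytrue ω)) = volume.restrict (Icc 0 1)) {ε : ℝ}
    (hε : ε ∈ Icc 0 1)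
    (hi : Integrable (fun ω => ((Finset.univ.filter (fun y => p ω y > ε)).card : ℝ)) μ) :
    ∫ ω, ((Finset.univ.filter (fun y => p ω y > ε)).card : ℝ) ∂μ
      = ∫ ω, (((Finset.univ.filter (fun y => p ω y > ε)).erase (ytrue ω)).card : ℝ) ∂μ
        + (1 - ε) := by
  have herase : (fun ω => (((Finset.univ.filter (fun y => p ω y > ε)).erase (ytrue ω)).card : ℝ))
      = fun ω => ((Finset.univ.filter (fun y => p ω y > ε)).card : ℝ)
          - (Ioi ε).indicator 1 (p ω (ytrue ω)) := by
    funext ω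
    rw [card_filter_gt_eq_card_erase_add_indicator (p ω) (ytrue ω) ε, add_sub_cancel_right]
  rw [herase, integral_sub hi (integrable_indicator_Ioi_comp_of_map_eq_uniform hunif ε),
    integral_indicator_Ioi_comp_of_map_eq_uniform hunif hε, sub_add_cancel]

theorem stmt_5_general {Ω Y : Type*} [MeasurableSpace Ω] [Fintype Y] [DecidableEq Y]
    (μ : Measure Ω)
    (ytrue : Ω → Y) (pA pB : Ω → Y → ℝ)
    (hunifA : Measure.map (fun ω => pA ω (ytrue ω)) μ
        = volume.restrict (Set.Icc (0:ℝ) 1))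
    (hunifB : Measure.map (fun ω => pB ω (ytrue ω)) μ
        = volume.restrict (Set.Icc (0:ℝ) 1))
    (hiA : ∀ ε : ℝ, Integrable
      (fun ω => ((Finset.univ.filter (fun y => pA ω y > ε)).card : ℝ)) μ)
    (hiB : ∀ ε : ℝ, Integrable
      (fun ω => ((Finset.univ.filter (fun y => pB ω y > ε)).card : ℝ)) μ) :
    ∀ ε ∈ Set.Ioo (0:ℝ) 1,
    ((∫ ω, ((Finset.univ.filter (fun y => pA ω y > ε)).card : ℝ) ∂μ)
      = (∫ ω, (((Finset.univ.filter (fun y => pA ω y > ε)).erase (ytrue ω)).card : ℝ) ∂μ)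
        + (1 - ε)) ∧
    ((∫ ω, ((Finset.univ.filter (fun y => pA ω y > ε)).card : ℝ) ∂μ
        ≤ ∫ ω, ((Finset.univ.filter (fun y => pB ω y > ε)).card : ℝ) ∂μ) ↔
      (∫ ω, (((Finset.univ.filter (fun y => pA ω y > ε)).erase (ytrue ω)).card : ℝ) ∂μ
        ≤ ∫ ω, (((Finset.univ.filter (fun y => pB ω y > ε)).erase (ytrue ω)).card : ℝ) ∂μ)) := by
  intro ε hε
  have eA := integral_card_filter_gt_eq_integral_card_erase_add hunifA (Ioo_subset_Icc_self hε)
    (hiA ε)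
  have eB := integral_card_filter_gt_eq_integral_card_erase_add hunifB (Ioo_subset_Icc_self hε)
    (hiB ε)
  rw [eA, eB]
  exact ⟨rfl, add_le_add_iff_right _⟩

theorem stmt_5 {Ω Y : Type*} [MeasurableSpace Ω] [Fintype Y] [DecidableEq Y]
    (μ : Measure Ω) [IsProbabilityMeasure μ]
    (ytrue : Ω → Y) (pA pB : Ω → Y → ℝ)
    (hA : ∀ ω y, pA ω y ∈ Set.Icc (0:ℝ) 1)
    (hB : ∀ ω y, pB ω y ∈ Set.Icc (0:ℝ) 1)
    (hunifA : Measure.map (fun ω => pA ω (ytrue ω)) μ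
        = volume.restrict (Set.Icc (0:ℝ) 1))
    (hunifB : Measure.map (fun ω => pB ω (ytrue ω)) μ
        = volume.restrict (Set.Icc (0:ℝ) 1))
    (hiA : ∀ ε : ℝ, Integrable
      (fun ω => ((Finset.univ.filter (fun y => pA ω y > ε)).card : ℝ)) μ)
    (hiB : ∀ ε : ℝ, Integrable
      (fun ω => ((Finset.univ.filter (fun y => pB ω y > ε)).card : ℝ)) μ)
    (hiA' : ∀ ε : ℝ, Integrable
      (fun ω => (((Finset.univ.filter (fun y => pA ω y > ε)).erase (ytrue ω)).card : ℝ)) μ)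
    (hiB' : ∀ ε : ℝ, Integrable
      (fun ω => (((Finset.univ.filter (fun y => pB ω y > ε)).erase (ytrue ω)).card : ℝ)) μ) :
    ∀ ε ∈ Set.Ioo (0:ℝ) 1,
    ((∫ ω, ((Finset.univ.filter (fun y => pA ω y > ε)).card : ℝ) ∂μ)
      = (∫ ω, (((Finset.univ.filter (fun y => pA ω y > ε)).erase (ytrue ω)).card : ℝ) ∂μ)
        + (1 - ε)) ∧
    ((∫ ω, ((Finset.univ.filter (fun y => pA ω y > ε)).card : ℝ) ∂μ
        ≤ ∫ ω, ((Finset.univ.filter (fun y => pB ω y > ε)).card : ℝ) ∂μ) ↔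
      (∫ ω, (((Finset.univ.filter (fun y => pA ω y > ε)).erase (ytrue ω)).card : ℝ) ∂μ
        ≤ ∫ ω, (((Finset.univ.filter (fun y => pB ω y > ε)).erase (ytrue ω)).card : ℝ) ∂μ)) :=
  stmt_5_general μ ytrue pA pB hunifA hunifB hiA hiB
end

section
/- If for every ε ∈ (0,1), E[|Γ^ε_A(x)|] ≤ E[|Γ^ε_B(x)|], then E[Σ_y p_A(x,y)] ≤ E[Σ_y p_B(x,y)]. That is, N-optimality of an idealized conformity measure implies its S-optimality. -/
/-! Layer cake: a p-value `p ∈ [0, 1]` equals `∫₀¹ 𝟙[ε < p] dε`, so `Σ_y p(x, y)` is the integral over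
`ε ∈ (0, 1)` of the size `|Γ^ε(x)|` of the prediction set. Taking expectations and swapping the two
integrals (Fubini; the integrand is bounded by `|Y|`) writes both sides of the claim as integrals over
`(0, 1)` of the expected prediction-set sizes, which are ordered pointwise by hypothesis. -/

open MeasureTheory Finset

lemma setIntegral_Ioo_zero_one_ite_lt {p : ℝ} (h0 : 0 ≤ p) (h1 : p ≤ 1) :
    ∫ ε in Set.Ioo (0 : ℝ) 1, (if ε < p then (1 : ℝ) else 0) = p := by
  have hind : (fun ε : ℝ => if ε < p then (1 : ℝ) else 0) = (Set.Iio p).indicator 1 := by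
    ext ε
    simp [Set.indicator_apply]
  have hset : Set.Iio p ∩ Set.Ioo 0 1 = Set.Ioo 0 p := by
    ext ε
    simp only [Set.mem_inter_iff, Set.mem_Iio, Set.mem_Ioo]
    exact ⟨fun h => ⟨h.2.1, h.1⟩, fun h => ⟨h.2, h.1, h.2.trans_le h1⟩⟩
  rw [hind, integral_indicator_one measurableSet_Iio, measureReal_restrict_apply measurableSet_Iio,
    hset, Real.volume_real_Ioo_of_le h0, sub_zero]

lemma natCast_card_filter_gt {Y : Type*} [Fintype Y] (q : Y → ℝ) (ε : ℝ) :
    ((univ.filter fun y => q y > ε).card : ℝ) = ∑ y, if ε < q y then (1 : ℝ) else 0 :=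
  natCast_card_filter _ _

lemma sum_eq_setIntegral_card_filter_gt {Y : Type*} [Fintype Y] (q : Y → ℝ)
    (hq : ∀ y, q y ∈ Set.Icc (0 : ℝ) 1) :
    ∑ y, q y = ∫ ε in Set.Ioo (0 : ℝ) 1, ((univ.filter fun y => q y > ε).card : ℝ) := by
  simp_rw [natCast_card_filter_gt]
  rw [integral_finsetSum _ fun y _ => ?_]
  · exact sum_congr rfl fun y _ => (setIntegral_Ioo_zero_one_ite_lt (hq y).1 (hq y).2).symm
  · exact (integrable_const 1).indicator (measurableSet_Iio (a := q y)) |>.congr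
      (ae_of_all _ fun ε => by simp [Set.indicator_apply])

lemma integrable_card_filter_gt {Ω Y : Type*} [MeasurableSpace Ω] [Fintype Y]
    (μ : Measure Ω) [IsFiniteMeasure μ] (ν : Measure ℝ) [IsFiniteMeasure ν] (p : Ω → Y → ℝ)
    (hm : ∀ y, Measurable fun ω => p ω y) :
    Integrable (fun q : Ω × ℝ => ((univ.filter fun y => p q.1 y > q.2).card : ℝ)) (μ.prod ν) := by
  have hmeas : Measurable fun q : Ω × ℝ => ((univ.filter fun y => p q.1 y > q.2).card : ℝ) := by
    simp_rw [natCast_card_filter_gt]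
    exact Finset.measurable_sum _ fun y _ =>
      Measurable.ite (measurableSet_lt measurable_snd ((hm y).comp measurable_fst))
        measurable_const measurable_const
  refine ⟨hmeas.aestronglyMeasurable, HasFiniteIntegral.of_bounded (C := Fintype.card Y)
    (ae_of_all _ fun q => ?_)⟩
  rw [Real.norm_natCast]
  exact_mod_cast card_filter_le _ _

lemma integral_sum_eq_setIntegral_integral_card_filter_gt {Ω Y : Type*} [MeasurableSpace Ω]
    [Fintype Y] (μ : Measure Ω) [IsFiniteMeasure μ] (p : Ω → Y → ℝ)
    (h : ∀ ω y, p ω y ∈ Set.Icc (0 : ℝ) 1) (hm : ∀ y, Measurable fun ω => p ω y) :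
    ∫ ω, ∑ y, p ω y ∂μ
      = ∫ ε in Set.Ioo (0 : ℝ) 1, ∫ ω, ((univ.filter fun y => p ω y > ε).card : ℝ) ∂μ := by
  simp_rw [fun ω => sum_eq_setIntegral_card_filter_gt (p ω) (h ω)]
  exact integral_integral_swap (integrable_card_filter_gt μ _ p hm)

theorem stmt_6 {Ω Y : Type*} [MeasurableSpace Ω] [Fintype Y]
    (μ : Measure Ω) [IsProbabilityMeasure μ]
    (pA pB : Ω → Y → ℝ)
    (hA : ∀ ω y, pA ω y ∈ Set.Icc (0:ℝ) 1)
    (hB : ∀ ω y, pB ω y ∈ Set.Icc (0:ℝ) 1)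
    (hmA : ∀ y, Measurable fun ω => pA ω y)
    (hmB : ∀ y, Measurable fun ω => pB ω y)
    (hN : ∀ ε ∈ Set.Ioo (0:ℝ) 1,
      ∫ ω, ((Finset.univ.filter (fun y => pA ω y > ε)).card : ℝ) ∂μ
        ≤ ∫ ω, ((Finset.univ.filter (fun y => pB ω y > ε)).card : ℝ) ∂μ) :
    ∫ ω, (∑ y : Y, pA ω y) ∂μ ≤ ∫ ω, (∑ y : Y, pB ω y) ∂μ := by
  rw [integral_sum_eq_setIntegral_integral_card_filter_gt μ pA hA hmA,
    integral_sum_eq_setIntegral_integral_card_filter_gt μ pB hB hmB]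
  exact setIntegral_mono_on (integrable_card_filter_gt μ _ pA hmA).integral_prod_right
    (integrable_card_filter_gt μ _ pB hmB).integral_prod_right measurableSet_Ioo hN
end

section
/- Let Z be a finite set, Q a probability measure on Z with Q({z}) > 0 for all z, and A : Z → ℝ a conformity score. Define, for τ ∈ [0,1], p_τ(z) := Q({z' : A(z') < A(z)}) + τ·Q({z' : A(z') = A(z)}). If Z ∼ Q and τ ∼ Uniform[0,1] independently, then p_τ(Z) is uniformly distributed on [0,1]. -/
/-!
Write `G a = Q(A < a)` and `H a = Q(A = a)`. Given `A(Z) = a`, the p-value `G a + τ H a` is uniform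
on `[G a, G a + H a]`, and as `a` runs through the values of `A` in increasing order these
intervals tile `[0, 1]`. So `p_τ(Z)` is a mixture, with weights `H a`, of uniform laws on the
tiles, which is the uniform law on `[0, 1]`. At the level of distribution functions the tiling is
a telescoping sum: with `M x = max 0 (min t x)`, the tile of `a` contributes
`H a * max 0 (min 1 ((t - G a) / H a)) = M (G a + H a) - M (G a)`.
-/
open MeasureTheory Finset

theorem Finset.sum_filter_lt_telescope {α β γ : Type*} [LinearOrder α] [AddCommMonoid β]
    [AddCommGroup γ] (F : β → γ) (w : α → β) (s : Finset α) :
    ∑ a ∈ s, (F (∑ b ∈ s with b < a, w b + w a) - F (∑ b ∈ s with b < a, w b)) =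
      F (∑ a ∈ s, w a) - F 0 := by
  induction s using Finset.induction_on_max with
  | empty => simp
  | insert a s ha ih =>
    have hna : a ∉ s := fun h => lt_irrefl a (ha a h)
    have hlt_a : ∑ b ∈ insert a s with b < a, w b = ∑ b ∈ s, w b := by
      rw [filter_insert, if_neg (lt_irrefl a), filter_true_of_mem ha]
    have hlt_c : ∀ c ∈ s, {b ∈ insert a s | b < c} = {b ∈ s | b < c} := fun c hc => by
      rw [filter_insert, if_neg (ha c hc).not_gt]
    have hrest : ∑ c ∈ s, (F (∑ b ∈ insert a s with b < c, w b + w c)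
          - F (∑ b ∈ insert a s with b < c, w b)) =
        ∑ c ∈ s, (F (∑ b ∈ s with b < c, w b + w c) - F (∑ b ∈ s with b < c, w b)) :=
      sum_congr rfl fun c hc => by rw [hlt_c c hc]
    rw [sum_insert hna, hlt_a, hrest, ih, sum_insert hna, add_comm (w a)]
    abel

theorem mul_clamp_div_eq_sub {g h t : ℝ} (hg : 0 ≤ g) (hh : 0 < h) :
    h * max 0 (min 1 ((t - g) / h)) = max 0 (min t (g + h)) - max 0 (min t g) := by
  rw [mul_max_of_nonneg _ _ hh.le, mul_zero, mul_min_of_nonneg _ _ hh.le, mul_one,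
    mul_div_cancel₀ _ hh.ne']
  simp only [max_def, min_def]
  split_ifs <;> linarith

theorem sum_mul_clamp_div_eq_clamp {s : Finset ℝ} {w : ℝ → ℝ} (hw : ∀ a ∈ s, 0 < w a)
    (hs : ∑ a ∈ s, w a = 1) (t : ℝ) :
    ∑ a ∈ s, w a * max 0 (min 1 ((t - ∑ b ∈ s with b < a, w b) / w a)) =
      max 0 (min 1 t) := by
  calc _ = ∑ a ∈ s, (max 0 (min t (∑ b ∈ s with b < a, w b + w a))
          - max 0 (min t (∑ b ∈ s with b < a, w b))) :=
        sum_congr rfl fun a ha =>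
          mul_clamp_div_eq_sub (sum_nonneg fun b hb => (hw b (mem_filter.1 hb).1).le) (hw a ha)
    _ = max 0 (min t 1) - max 0 (min t 0) := by
        rw [sum_filter_lt_telescope (fun x => max 0 (min t x)), hs]
    _ = max 0 (min 1 t) := by rw [min_comm t 1, max_eq_left (min_le_right t 0), sub_zero]

theorem volume_restrict_Icc_zero_one_Iic (m : ℝ) :
    volume.restrict (Set.Icc (0:ℝ) 1) (Set.Iic m) = ENNReal.ofReal (max 0 (min 1 m)) := by
  have : Set.Iic m ∩ Set.Icc 0 1 = Set.Icc 0 (min 1 m) := by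
    ext x
    simp only [Set.mem_inter_iff, Set.mem_Iic, Set.mem_Icc, le_min_iff]
    tauto
  rw [Measure.restrict_apply measurableSet_Iic, this, Real.volume_Icc, sub_zero, ENNReal.ofReal_max,
    ENNReal.ofReal_zero, max_eq_right zero_le]

theorem volume_restrict_Icc_zero_one_setOf_add_mul_le {g h : ℝ} (hh : 0 < h) (t : ℝ) :
    volume.restrict (Set.Icc (0:ℝ) 1) {τ | g + τ * h ≤ t} =
      ENNReal.ofReal (max 0 (min 1 ((t - g) / h))) := by
  have : {τ | g + τ * h ≤ t} = Set.Iic ((t - g) / h) := by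
    ext τ
    rw [Set.mem_ofPred_eq, Set.mem_Iic, le_div_iff₀ hh]
    constructor <;> intro <;> linarith
  rw [this, volume_restrict_Icc_zero_one_Iic]

theorem measureReal_setOf_apply_eq_pos {Z : Type*} [MeasurableSpace Z] {μ : Measure Z}
    [IsFiniteMeasure μ] (A : Z → ℝ) {z : Z} (hz : 0 < μ {z}) :
    0 < μ.real {z' | A z' = A z} :=
  ENNReal.toReal_pos (hz.trans_le (measure_mono fun _ h => congrArg A h)).ne' (measure_ne_top μ _)

section FiniteSpace

variable {Z : Type*} [Fintype Z] [MeasurableSpace Z] [MeasurableSingletonClass Z]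
  (μ : Measure Z) (A : Z → ℝ)

theorem measureReal_setOf_comp_eq_sum [IsFiniteMeasure μ] (p : ℝ → Prop) [DecidablePred p] :
    μ.real {z | p (A z)} = ∑ a ∈ univ.image A with p a, μ.real (A ⁻¹' {a}) := by
  rw [sum_measureReal_preimage_singleton _ fun _ _ => .of_discrete]
  congr 1
  ext z
  simp

theorem sum_measureReal_singleton_mul_comp [IsFiniteMeasure μ] (φ : ℝ → ℝ) :
    ∑ z, μ.real {z} * φ (A z) = ∑ a ∈ univ.image A, μ.real (A ⁻¹' {a}) * φ a := by
  rw [← sum_fiberwise_of_maps_to fun z _ => mem_image_of_mem A (mem_univ z)]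
  refine sum_congr rfl fun a _ => ?_
  rw [sum_congr rfl fun z hz => by rw [(mem_filter.1 hz).2], ← sum_mul, sum_measureReal_singleton]
  congr 2
  ext z
  simp

theorem sum_measureReal_singleton_mul_clamp [IsProbabilityMeasure μ] (hpos : ∀ z, 0 < μ {z})
    (t : ℝ) :
    ∑ z, μ.real {z} *
        max 0 (min 1 ((t - μ.real {z' | A z' < A z}) / μ.real {z' | A z' = A z})) =
      max 0 (min 1 t) := by
  have hfiber_pos : ∀ a ∈ univ.image A, 0 < μ.real (A ⁻¹' {a}) := by
    simp only [mem_image, mem_univ, true_and, forall_exists_index, forall_apply_eq_imp_iff]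
    exact fun z => measureReal_setOf_apply_eq_pos A (hpos z)
  have hfiber_sum : ∑ a ∈ univ.image A, μ.real (A ⁻¹' {a}) = 1 := by
    rw [sum_measureReal_preimage_singleton _ fun _ _ => .of_discrete, coe_image, coe_univ,
      Set.preimage_image_univ, probReal_univ]
  have hlt : ∀ a,
      μ.real {z' | A z' < a} = ∑ b ∈ univ.image A with b < a, μ.real (A ⁻¹' {b}) :=
    fun a => measureReal_setOf_comp_eq_sum μ A (· < a)
  simp_rw [sum_measureReal_singleton_mul_comp μ A
    (fun a => max 0 (min 1 ((t - μ.real {z' | A z' < a}) / μ.real {z' | A z' = a}))), hlt]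
  exact sum_mul_clamp_div_eq_clamp hfiber_pos hfiber_sum t

end FiniteSpace

theorem stmt_8 {Z : Type*} [Fintype Z] [MeasurableSpace Z]
    [MeasurableSingletonClass Z]
    (μ : Measure Z) [IsProbabilityMeasure μ]
    (hpos : ∀ z : Z, 0 < μ {z}) (A : Z → ℝ) :
    Measure.map
      (fun zt : Z × ℝ =>
        (μ {z' | A z' < A zt.1}).toReal + zt.2 * (μ {z' | A z' = A zt.1}).toReal)
      (μ.prod (volume.restrict (Set.Icc (0:ℝ) 1)))
      = volume.restrict (Set.Icc (0:ℝ) 1) := by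
  have hmeas : Measurable (fun zt : Z × ℝ =>
      (μ {z' | A z' < A zt.1}).toReal + zt.2 * (μ {z' | A z' = A zt.1}).toReal) := by
    fun_prop
  refine Measure.ext_of_Iic _ _ fun t => ?_
  rw [Measure.map_apply hmeas measurableSet_Iic, Measure.prod_apply (hmeas measurableSet_Iic),
    lintegral_fintype, volume_restrict_Icc_zero_one_Iic,
    ← sum_measureReal_singleton_mul_clamp μ A hpos t,
    ENNReal.ofReal_sum_of_nonneg fun z _ => by positivity]
  refine sum_congr rfl fun z _ => ?_
  rw [ENNReal.ofReal_mul measureReal_nonneg, ofReal_measureReal, mul_comm]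
  congr 1
  exact volume_restrict_Icc_zero_one_setOf_add_mul_le (g := μ.real {z' | A z' < A z})
    (measureReal_setOf_apply_eq_pos A (hpos z)) t
end

section
/- With f, D, p, q as above (f continuous and positive on (0,1]), the density g(a) = D/q(a) of p(Q) on (0,1) is nonincreasing in a, and g(1) = D (since q(1) = 1). Consequently, q(a) = g(1)/g(a) for all a ∈ (0,1], recovering the conditional probability from the density of p-values. -/
theorem stmt_11 (f : ℝ → ℝ)
    (hf_cont : ContinuousOn f (Set.Icc 0 1))
    (hf_nonneg : ∀ x ∈ Set.Icc (0:ℝ) 1, 0 ≤ f x)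
    (hf_pos : ∀ x ∈ Set.Ioc (0:ℝ) 1, 0 < f x)
    (hf_int : ∫ x in (0:ℝ)..1, f x = 1)
    (D : ℝ) (hD : D = ∫ x in (0:ℝ)..1, x * f x)
    (p : ℝ → ℝ) (hp : ∀ x, p x = (1 / D) * ∫ x' in (0:ℝ)..x, x' * f x')
    (qinv : ℝ → ℝ)
    (hqinv : ∀ a ∈ Set.Icc (0:ℝ) 1, qinv a ∈ Set.Icc (0:ℝ) 1 ∧ p (qinv a) = a)
    (g : ℝ → ℝ) (hg : ∀ a, g a = D / qinv a) :
    AntitoneOn g (Set.Ioc (0:ℝ) 1) ∧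
    qinv 1 = 1 ∧
    g 1 = D ∧
    ∀ a ∈ Set.Ioc (0:ℝ) 1, qinv a = g 1 / g a := by
  have hcont : ContinuousOn (fun x : ℝ => x * f x) (Set.Icc 0 1) :=
    continuousOn_id.mul hf_cont
  have hint : ∀ x ∈ Set.Icc (0:ℝ) 1, ∀ y ∈ Set.Icc (0:ℝ) 1,
      IntervalIntegrable (fun t => t * f t) MeasureTheory.volume x y := by
    intro x hx y hy
    exact (hcont.mono (Set.uIcc_subset_Icc hx hy)).intervalIntegrable
  have h01 : (0:ℝ) ∈ Set.Icc (0:ℝ) 1 := by norm_num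
  have h11 : (1:ℝ) ∈ Set.Icc (0:ℝ) 1 := by norm_num
  have hD_pos : 0 < D := by
    rw [hD]
    apply intervalIntegral.intervalIntegral_pos_of_pos_on (hint 0 h01 1 h11)
    · intro x hx; exact mul_pos hx.1 (hf_pos x ⟨hx.1, hx.2.le⟩)
    · norm_num
  have hpmono : ∀ x ∈ Set.Icc (0:ℝ) 1, ∀ y ∈ Set.Icc (0:ℝ) 1, x < y → p x < p y := by
    intro x hx y hy hxy
    rw [hp, hp]
    apply mul_lt_mul_of_pos_left _ (by positivity)
    have hadd := intervalIntegral.integral_add_adjacent_intervals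
      (hint 0 h01 x hx) (hint x hx y hy)
    have hpos : 0 < ∫ t in x..y, t * f t := by
      apply intervalIntegral.intervalIntegral_pos_of_pos_on (hint x hx y hy) _ hxy
      intro t ht
      have ht0 : 0 < t := lt_of_le_of_lt hx.1 ht.1
      exact mul_pos ht0 (hf_pos t ⟨ht0, ht.2.le.trans hy.2⟩)
    linarith
  have hp1 : p 1 = 1 := by
    rw [hp, ← hD]
    field_simp
  have hq1 : qinv 1 = 1 := by
    obtain ⟨hmem, hpq⟩ := hqinv 1 h11
    by_contra hne
    have hlt : qinv 1 < 1 := lt_of_le_of_ne hmem.2 hne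
    have := hpmono _ hmem _ h11 hlt
    rw [hpq, hp1] at this
    exact lt_irrefl _ this
  have hp0 : p 0 = 0 := by
    rw [hp]; simp
  have hqpos : ∀ a ∈ Set.Ioc (0:ℝ) 1, 0 < qinv a := by
    intro a ha
    obtain ⟨hmem, hpq⟩ := hqinv a ⟨ha.1.le, ha.2⟩
    rcases lt_or_eq_of_le hmem.1 with h | h
    · exact h
    · exfalso; rw [← h, hp0] at hpq; linarith [ha.1]
  have hqmono : ∀ a ∈ Set.Ioc (0:ℝ) 1, ∀ b ∈ Set.Ioc (0:ℝ) 1, a ≤ b → qinv a ≤ qinv b := by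
    intro a ha b hb hab
    obtain ⟨hmema, hpa⟩ := hqinv a ⟨ha.1.le, ha.2⟩
    obtain ⟨hmemb, hpb⟩ := hqinv b ⟨hb.1.le, hb.2⟩
    by_contra hlt
    push_neg at hlt
    have := hpmono _ hmemb _ hmema hlt
    rw [hpa, hpb] at this
    linarith
  refine ⟨?_, hq1, ?_, ?_⟩
  · intro a ha b hb hab
    rw [hg, hg]
    exact div_le_div_of_nonneg_left hD_pos.le (hqpos a ha) (hqmono a ha b hb hab)
  · rw [hg, hq1, div_one]
  · intro a ha
    have h1 : (1:ℝ) ∈ Set.Ioc (0:ℝ) 1 := by norm_num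
    rw [hg, hg, hq1, div_one, div_div_eq_mul_div, mul_comm, mul_div_assoc,
      div_self hD_pos.ne', mul_one]
end
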